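/- Let R be a commutative local ring, A a finite R-Hopf algebra (finitely generated projective over R) possessing a nonzero left integral λ with A* = A·λ free of rank one as a left A-module (Larson–Sweedler), and S a faithful left A-module algebra, finite over R with rank_R(S) = rank_R(A) and S^A = R. Then S is a tame A-extension of R (i.e., λ·S = R for a suitable left integral λ) if and only if there exists a left A-module homomorphism g : A* → S with g(ε) = 1, where ε ∈ A* is the counit (the unit of A*). -/
import Mathlib


open Coalgebra

variable (R H M : Type*)

/-- The `H`-invariants `M^H = {m ∈ M : h • m = ε(h) m for all h ∈ H}`. -/
def Hinvariants [CommRing R] [Ring H] [HopfAlgebra R H]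
    [AddCommGroup M] [Module R M] [Module H M] [SMulCommClass H R M] :
    Submodule R M where
  carrier := {m | ∀ h : H, h • m = Coalgebra.counit (R := R) h • m}
  add_mem' := by intro a b ha hb h; simp [smul_add, ha h, hb h]
  zero_mem' := by intro h; simp
  smul_mem' := by intro r m hm h; rw [smul_comm, hm h, smul_comm]

/-- Let `R` be a commutative local ring, `A` a finite projective
`R`-Hopf algebra admitting a nonzero left integral `lam` with `A* = A·t` free of rank
one as a left `A`-module under the hit action `(h • f)(k) = f(k h)` and `lam • t = ε`
(Larson–Sweedler), and `S` a faithful left `A`-module algebra, finite over `R` with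
`rank_R S = rank_R A` and `S^A = R`.  Then `S` is a tame `A`-extension of `R`
(i.e. `λ·S = R` for a suitable left integral `λ`; since `λ·S ⊆ S^A = R·1` this means
`1 ∈ λ·S`) if and only if there is a left `A`-module homomorphism `g : A* → S` with
`g(ε) = 1`. -/
theorem tame_iff_exists_total_integral
    (A S : Type*) [CommRing R] [IsLocalRing R]
    [Ring A] [HopfAlgebra R A] [Module.Finite R A] [Module.Projective R A]
    [CommRing S] [Algebra R S] [Module.Finite R S] [Module.Projective R S]
    -- `S` is a faithful left `A`-module algebra:
    [Module A S] [IsScalarTower R A S] [SMulCommClass A R S] [FaithfulSMul A S]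
    (hSalg : ∀ (h : A) (s t : S), h • (s * t) =
      ∑ i ∈ (ℛ R h).index, ((ℛ R h).left i • s) * ((ℛ R h).right i • t))
    (hSone : ∀ h : A, h • (1 : S) = Coalgebra.counit (R := R) h • (1 : S))
    -- `rank_R S = rank_R A`:
    (hrank : Module.finrank R S = Module.finrank R A)
    -- `S^A = R`:
    (hinv : Hinvariants R A S = (1 : Submodule R S))
    -- Larson–Sweedler: `A* = A·t` is free of rank one under the hit action, with
    -- `lam • t = ε` for some left integral `lam ≠ 0`:
    (hLS : ∃ (t : Module.Dual R A) (lam : A), lam ≠ 0 ∧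
      (∀ k : A, k * lam = Coalgebra.counit (R := R) k • lam) ∧
      Function.Bijective (fun h : A => t ∘ₗ LinearMap.mulRight R h) ∧
      t ∘ₗ LinearMap.mulRight R lam = Coalgebra.counit (R := R)) :
    -- tameness ↔ existence of a total integral `g : A* → S`, `g(ε) = 1`
    ((∃ lam : A, (∀ k : A, k * lam = Coalgebra.counit (R := R) k • lam) ∧
        ∃ s : S, lam • s = 1) ↔
      (∃ g : Module.Dual R A →ₗ[R] S,
        (∀ (h : A) (f : Module.Dual R A), g (f ∘ₗ LinearMap.mulRight R h) = h • g f) ∧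
        g (Coalgebra.counit (R := R)) = 1)) := by
  obtain ⟨t, lam0, hne, hint0, hbij, ht⟩ := hLS
  -- Bundle the bijection as a linear equivalence `Φ : A ≃ₗ[R] A*`.
  let Φ : A →ₗ[R] Module.Dual R A :=
    { toFun := fun h => t ∘ₗ LinearMap.mulRight R h
      map_add' := by intro a b; ext x; simp [mul_add]
      map_smul' := by intro r a; ext x; simp [mul_smul_comm] }
  have hΦbij : Function.Bijective Φ := hbij
  let e : A ≃ₗ[R] Module.Dual R A := LinearEquiv.ofBijective Φ hΦbij
  have hΦapp : ∀ (h : A) (x : A), Φ h x = t (x * h) := fun _ _ => rfl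
  have hΦcomp : ∀ (h k : A) (f : Module.Dual R A), f = Φ k →
      f ∘ₗ LinearMap.mulRight R h = Φ (h * k) := by
    intro h k f hf; subst hf; ext x
    simp [hΦapp, mul_assoc]
  have hεeq : Coalgebra.counit (R := R) = Φ lam0 := ht.symm
  constructor
  · rintro ⟨lam, hint, s, hs⟩
    -- `lam = t lam • lam0` by injectivity of `Φ`.
    have key : lam = t lam • lam0 := by
      apply hΦbij.injective
      rw [map_smul]
      ext k
      rw [hΦapp, hint k, map_smul]
      have : Φ lam0 k = Coalgebra.counit (R := R) k := by rw [← hεeq]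
      simp [this, mul_comm]
    set s0 : S := t lam • s with hs0
    refine ⟨{ toFun := fun f => e.symm f • s0
              map_add' := by intro a b; simp [add_smul]
              map_smul' := by intro r a; simp [smul_assoc] }, ?_, ?_⟩
    · intro h f
      have hf : f = Φ (e.symm f) := (e.apply_symm_apply f).symm
      have : f ∘ₗ LinearMap.mulRight R h = Φ (h * e.symm f) := hΦcomp h _ f hf
      simp only [LinearMap.coe_mk, AddHom.coe_mk, this]
      have : e.symm (Φ (h * e.symm f)) = h * e.symm f := e.symm_apply_apply _
      rw [this, mul_smul]
    · have h1 : e.symm (Coalgebra.counit (R := R)) = lam0 := by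
        rw [hεeq]; exact e.symm_apply_apply lam0
      simp only [LinearMap.coe_mk, AddHom.coe_mk, h1, hs0]
      rw [smul_comm, ← smul_assoc, ← key]
      · exact hs
  · rintro ⟨g, hg, hg1⟩
    refine ⟨lam0, hint0, g t, ?_⟩
    have := hg lam0 t
    rw [ht, hg1] at this
    exact this.symm
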